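/- Let A be an n×n tridiagonal matrix with all sub- and superdiagonal entries nonzero, and let b = e_{n-1}. Then the vectors b, Ab, A²b, ..., A^{n-1}b are linearly independent; i.e., the Krylov space K_n(A, e_{n-1}) is all of ℝ^n. -/

import Mathlib

/-!
Write `b = e_{n-1}`. Since `A` has no entries above the superdiagonal, each multiplication by `A`
moves the support of a vector at most one index down, and the entry at the new lowest index is
the old one times a superdiagonal entry of `A`. Hence `A^m b` vanishes below index `n-1-m` and
is nonzero there, so the matrix with rows `A^m b` becomes triangular with nonzero diagonal after
reversing its columns.
-/

open Matrix

def krylov (n k : ℕ) (A : Matrix (Fin n) (Fin n) ℝ) (b : Fin n → ℝ) :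
    Submodule ℝ (Fin n → ℝ) :=
  Submodule.span ℝ {v | ∃ m < k, v = (A ^ m).mulVec b}

def reachLE (n : ℕ) (A : Matrix (Fin n) (Fin n) ℝ) : ℕ → Fin n → Fin n → Prop
  | 0 => fun i j => i = j
  | m + 1 => fun i j => ∃ x : Fin n, (x = i ∨ A i x ≠ 0 ∨ A x i ≠ 0) ∧ reachLE n A m x j

theorem linearIndependent_of_eq_zero_of_lt_rev {R : Type*} [CommRing R] [IsDomain R] {n : ℕ}
    (v : Fin n → Fin n → R) (hzero : ∀ m i, i < Fin.rev m → v m i = 0)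
    (hrev : ∀ m, v m (Fin.rev m) ≠ 0) : LinearIndependent R v := by
  have hlower : ((of v).submatrix id Fin.revPerm).IsLowerTriangular := fun m k hmk =>
    hzero m _ (Fin.rev_lt_rev.mpr hmk)
  have hdet : ((of v).submatrix id Fin.revPerm).det ≠ 0 := by
    rw [det_of_isLowerTriangular _ hlower]
    exact Finset.prod_ne_zero_iff.mpr fun m _ => hrev m
  rw [det_permute'] at hdet
  exact linearIndependent_rows_of_det_ne_zero (right_ne_zero_of_mul hdet)

section Hessenberg

variable {R : Type*} {k : ℕ} {A : Matrix (Fin (k + 1)) (Fin (k + 1)) R}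

theorem pow_mulVec_single_last_eq_zero [Semiring R]
    (hA : ∀ i j : Fin (k + 1), (i : ℕ) + 1 < j → A i j = 0) (m : ℕ) (i : Fin (k + 1))
    (hi : (i : ℕ) + m < k) : (A ^ m *ᵥ Pi.single (Fin.last k) 1) i = 0 := by
  induction m generalizing i with
  | zero =>
    rw [pow_zero, one_mulVec, Pi.single_apply, if_neg (fun h => by simp [h] at hi)]
  | succ m ih =>
    rw [pow_succ', ← mulVec_mulVec]
    change ∑ j, A i j * (A ^ m *ᵥ Pi.single (Fin.last k) 1) j = 0
    refine Finset.sum_eq_zero fun j _ => ?_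
    by_cases hj : (j : ℕ) + m < k
    · rw [ih j hj, mul_zero]
    · rw [hA i j (by omega), zero_mul]

theorem pow_mulVec_single_last_ne_zero [Semiring R] [NoZeroDivisors R] [Nontrivial R]
    (hA : ∀ i j : Fin (k + 1), (i : ℕ) + 1 < j → A i j = 0)
    (hsuper : ∀ i j : Fin (k + 1), (j : ℕ) = i + 1 → A i j ≠ 0) (m : ℕ) (i : Fin (k + 1))
    (hi : (i : ℕ) + m = k) : (A ^ m *ᵥ Pi.single (Fin.last k) 1) i ≠ 0 := by
  induction m generalizing i with
  | zero =>
    obtain rfl : i = Fin.last k := Fin.ext hi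
    simp
  | succ m ih =>
    let j : Fin (k + 1) := ⟨i + 1, by omega⟩
    have hj : (j : ℕ) + m = k := by simp only [j]; omega
    rw [pow_succ', ← mulVec_mulVec]
    change ∑ x, A i x * (A ^ m *ᵥ Pi.single (Fin.last k) 1) x ≠ 0
    rw [Finset.sum_eq_single j]
    · exact mul_ne_zero (hsuper i j rfl) (ih j hj)
    · intro x _ hx
      have hxj : (x : ℕ) ≠ j := fun h => hx (Fin.ext h)
      by_cases hxm : (x : ℕ) + m < k
      · rw [pow_mulVec_single_last_eq_zero hA m x hxm, mul_zero]
      · rw [hA i x (by simp only [j] at hxj; omega), zero_mul]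
    · exact absurd (Finset.mem_univ j)

theorem linearIndependent_pow_mulVec_single_last [CommRing R] [IsDomain R]
    (hA : ∀ i j : Fin (k + 1), (i : ℕ) + 1 < j → A i j = 0)
    (hsuper : ∀ i j : Fin (k + 1), (j : ℕ) = i + 1 → A i j ≠ 0) :
    LinearIndependent R fun m : Fin (k + 1) => A ^ (m : ℕ) *ᵥ Pi.single (Fin.last k) 1 :=
  linearIndependent_of_eq_zero_of_lt_rev _
    (fun m i hi => pow_mulVec_single_last_eq_zero hA m i
      (by rw [Fin.lt_def, Fin.val_rev] at hi; omega))
    (fun m => pow_mulVec_single_last_ne_zero hA hsuper m _ (by rw [Fin.val_rev]; omega))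

end Hessenberg

theorem krylov_eq_span_range (n k : ℕ) (A : Matrix (Fin n) (Fin n) ℝ) (b : Fin n → ℝ) :
    krylov n k A b = Submodule.span ℝ (Set.range fun m : Fin k => A ^ (m : ℕ) *ᵥ b) := by
  unfold krylov
  congr 1
  ext v
  constructor
  · rintro ⟨m, hm, rfl⟩
    exact ⟨⟨m, hm⟩, rfl⟩
  · rintro ⟨m, rfl⟩
    exact ⟨m, m.isLt, rfl⟩

theorem stmt9 (n : ℕ) (hn : 0 < n) (A : Matrix (Fin n) (Fin n) ℝ)
    (htri : ∀ i j : Fin n, 1 < ((i : ℤ) - (j : ℤ)).natAbs → A i j = 0)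
    (hsub : ∀ i : Fin n, ∀ h : (i : ℕ) + 1 < n,
      A i ⟨(i : ℕ) + 1, h⟩ ≠ 0 ∧ A ⟨(i : ℕ) + 1, h⟩ i ≠ 0) :
    LinearIndependent ℝ
      (fun m : Fin n => (A ^ (m : ℕ)).mulVec (Pi.single (⟨n - 1, by omega⟩ : Fin n) (1 : ℝ)))
    ∧ krylov n n A (Pi.single (⟨n - 1, by omega⟩ : Fin n) (1 : ℝ)) = ⊤ := by
  obtain ⟨k, rfl⟩ : ∃ k, n = k + 1 := ⟨n - 1, by omega⟩
  have hlast : (⟨k + 1 - 1, by omega⟩ : Fin (k + 1)) = Fin.last k := Fin.ext (by simp)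
  rw [hlast]
  have hli := linearIndependent_pow_mulVec_single_last (R := ℝ)
    (fun i j hij => htri i j (by omega))
    (fun i ⟨j, hj⟩ hij => by subst hij; exact (hsub i hj).1)
  refine ⟨hli, ?_⟩
  rw [krylov_eq_span_range]
  exact hli.span_eq_top_of_card_eq_finrank (by simp)
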